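/- Let T be a tournament on N vertices with a median order v_1,...,v_N, and let a, a', b, ℓ, s, k, Δ⁻ be positive integers with 2a' ≥ a. For every index j with 2ka' < j ≤ N - a + 1 and every set B ⊆ [j, j+a) of size at least b, there exist an index j' with j - 2ka' ≤ j' ≤ j - a' and a set A ⊆ [j', j'+a') such that |A| ≥ (a'/2)·((k-1)/(2k))^ℓ and all but at most 4·((2k)/(k-1))^ℓ·C(a',Δ⁻)·(s/b)^ℓ of the Δ⁻-element subsets S of A satisfy |N⁺(S) ∩ B| ≥ s + 1. -/

import Mathlib

/-!
Moving `v_q` to position `p` of a median order changes only the orientation of the pairs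
`{v_t, v_q}` with `p ≤ t < q`, so `v_q` has at least as many in-neighbours as out-neighbours in
`[p, q)`. Hence every `y ∈ B` has at least `(k-1)a'` in-neighbours in `I = [j - 2ka', j)`, and by
convexity `∑_{v ∈ I} |N⁺(v) ∩ B|^ℓ ≥ |I| ((k-1)|B|/(2k))^ℓ`.

Now choose one of the `2k` blocks of length `a'` of `I` and an `ℓ`-tuple of vertices of `B`
uniformly at random, and let `A` be the set of common in-neighbours of the tuple in the block.
The expected size of `A` is at least `a'((k-1)/(2k))^ℓ`, while a `Δ⁻`-set `S` with
`|N⁺(S) ∩ B| ≤ s` lies in `A` only if the tuple lies in `N⁺(S) ∩ B`, i.e. with probability at most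
`(s/|B|)^ℓ`. A choice for which `|A|` minus a suitable multiple of the number of such `S` is at
least its expectation gives the theorem.
-/

open scoped Classical

open Finset

theorem card_mul_pow_le_sum_pow {ι α : Type*} [CommSemiring α] [LinearOrder α]
    [IsStrictOrderedRing α] [ExistsAddOfLE α] {s : Finset ι} {f : ι → α} {c : α}
    (hf : ∀ i ∈ s, 0 ≤ f i) (hc : 0 ≤ c)
    (h : #s * c ≤ ∑ i ∈ s, f i) : ∀ n : ℕ, #s * c ^ n ≤ ∑ i ∈ s, f i ^ n
  | 0 => by simp
  | n + 1 => by
    obtain rfl | hs := s.eq_empty_or_nonempty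
    · simp
    refine le_of_mul_le_mul_left ?_ (pow_pos (Nat.cast_pos.mpr hs.card_pos) n)
    calc (#s : α) ^ n * (#s * c ^ (n + 1)) = (#s * c) ^ (n + 1) := by ring
      _ ≤ (∑ i ∈ s, f i) ^ (n + 1) := pow_le_pow_left₀ (by positivity) h _
      _ ≤ (#s : α) ^ n * ∑ i ∈ s, f i ^ (n + 1) := pow_sum_le_card_mul_sum_pow hf n

theorem exists_half_le_and_mul_le {ι : Type*} {P : Finset ι} (hP : P.Nonempty) {x y : ι → ℝ}
    {α γ : ℝ} (hα : 0 < α) (hγ : 0 ≤ γ) (hy : ∀ i ∈ P, 0 ≤ y i)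
    (hsumx : #P * α ≤ ∑ i ∈ P, x i) (hsumy : ∑ i ∈ P, y i ≤ #P * γ) :
    ∃ i ∈ P, α / 2 ≤ x i ∧ α * y i ≤ 2 * γ * x i := by
  rcases hγ.eq_or_lt with rfl | hγ
  · have hy0 : ∀ i ∈ P, y i = 0 :=
      (sum_eq_zero_iff_of_nonneg hy).mp (le_antisymm (by simpa using hsumy) (sum_nonneg hy))
    obtain ⟨i, hi, hxi⟩ := exists_le_of_sum_le hP (f := fun _ => α) (by simpa using hsumx)
    exact ⟨i, hi, by linarith, by simp [hy0 i hi]⟩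
  · -- the penalised count `2γx - αy` has average at least `αγ`
    have hsum : ∑ _i ∈ P, α * γ ≤ ∑ i ∈ P, (2 * γ * x i - α * y i) := by
      simp only [sum_sub_distrib, ← mul_sum, sum_const, nsmul_eq_mul]
      nlinarith [mul_le_mul_of_nonneg_left hsumx (by positivity : (0 : ℝ) ≤ 2 * γ),
        mul_le_mul_of_nonneg_left hsumy hα.le]
    obtain ⟨i, hi, hxy⟩ := exists_le_of_sum_le hP hsum
    refine ⟨i, hi, ?_, by nlinarith [hy i hi]⟩
    nlinarith [hy i hi]

section DependentRandomChoice

variable {α β : Type*} (T : α → β → Prop) (B : Finset β)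

noncomputable def commonOutNbhd (S : Finset α) : Finset β := {y ∈ B | ∀ x ∈ S, T x y}

noncomputable def sparseSubsets (s Δ : ℕ) (A : Finset α) : Finset (Finset α) :=
  {S ∈ A.powersetCard Δ | #(commonOutNbhd T B S) < s + 1}

theorem card_filter_piFinset_forall (ℓ : ℕ) (P : β → Prop) [DecidablePred P] :
    #{f ∈ Fintype.piFinset fun _ : Fin ℓ => B | ∀ i, P (f i)} = #{y ∈ B | P y} ^ ℓ := by
  have : {f ∈ Fintype.piFinset fun _ : Fin ℓ => B | ∀ i, P (f i)} =
      Fintype.piFinset fun _ : Fin ℓ => {y ∈ B | P y} := by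
    ext f
    simp only [mem_filter, Fintype.mem_piFinset, forall_and]
  rw [this, Fintype.card_piFinset, prod_const, card_univ, Fintype.card_fin]

theorem sum_card_filter_forall_eq_sum_pow (X : Finset α) (ℓ : ℕ) :
    ∑ f ∈ Fintype.piFinset (fun _ : Fin ℓ => B), #{v ∈ X | ∀ t, T v (f t)} =
      ∑ v ∈ X, #{y ∈ B | T v y} ^ ℓ := by
  refine (sum_card_bipartiteAbove_eq_sum_card_bipartiteBelow
    (r := fun (f : Fin ℓ → β) v => ∀ t, T v (f t))).trans ?_
  exact sum_congr rfl fun v _ => card_filter_piFinset_forall B ℓ (T v)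

theorem sum_card_sparseSubsets_le (X : Finset α) (ℓ s Δ : ℕ) :
    ∑ f ∈ Fintype.piFinset (fun _ : Fin ℓ => B),
        #(sparseSubsets T B s Δ {v ∈ X | ∀ t, T v (f t)}) ≤ (#X).choose Δ * s ^ ℓ := by
  have hrestrict : ∀ f : Fin ℓ → β, sparseSubsets T B s Δ {v ∈ X | ∀ t, T v (f t)} =
      {S ∈ sparseSubsets T B s Δ X | ∀ t, ∀ x ∈ S, T x (f t)} := fun f => by
    ext S
    simp only [sparseSubsets, mem_filter, mem_powersetCard, subset_iff]
    grind
  calc ∑ f ∈ Fintype.piFinset (fun _ : Fin ℓ => B),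
          #(sparseSubsets T B s Δ {v ∈ X | ∀ t, T v (f t)})
      = ∑ S ∈ sparseSubsets T B s Δ X,
          #{f ∈ Fintype.piFinset (fun _ : Fin ℓ => B) | ∀ t, ∀ x ∈ S, T x (f t)} := by
        simp only [hrestrict]
        exact sum_card_bipartiteAbove_eq_sum_card_bipartiteBelow _
    _ ≤ ∑ _S ∈ sparseSubsets T B s Δ X, s ^ ℓ := sum_le_sum fun S hS => by
        rw [card_filter_piFinset_forall B ℓ (fun y => ∀ x ∈ S, T x y)]
        exact Nat.pow_le_pow_left (Nat.lt_succ_iff.mp (mem_filter.mp hS).2) ℓ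
    _ ≤ (#X).choose Δ * s ^ ℓ := by
        rw [sum_const, smul_eq_mul, ← card_powersetCard]
        exact Nat.mul_le_mul_right _ (card_filter_le _ _)

theorem exists_large_subset_few_sparseSubsets {ι : Type*} (J : Finset ι) (W : ι → Finset α)
    {m ℓ s Δ b : ℕ} {θ : ℝ} (hθ : 0 < θ) (hm : 0 < m) (hJ : J.Nonempty) (hb : 0 < b)
    (hbB : b ≤ #B) (hW : ∀ i ∈ J, #(W i) ≤ m)
    (hdeg : #J * m * (θ * #B) ^ ℓ ≤ ∑ i ∈ J, ∑ v ∈ W i, (#{y ∈ B | T v y} : ℝ) ^ ℓ) :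
    ∃ i ∈ J, ∃ A ⊆ W i, (m : ℝ) / 2 * θ ^ ℓ ≤ #A ∧
      (#(sparseSubsets T B s Δ A) : ℝ) ≤ 2 * θ⁻¹ ^ ℓ * m.choose Δ * ((s : ℝ) / b) ^ ℓ := by
  set F := Fintype.piFinset fun _ : Fin ℓ => B
  set A : ι × (Fin ℓ → β) → Finset α := fun e => {v ∈ W e.1 | ∀ t, T v (e.2 t)}
  have hB : B.Nonempty := card_pos.mp (hb.trans_le hbB)
  have hP : (J ×ˢ F).Nonempty := hJ.product (Fintype.piFinset_nonempty.mpr fun _ => hB)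
  have hcardP : (#(J ×ˢ F) : ℝ) = #J * #B ^ ℓ := by
    simp [F, card_product, Fintype.card_piFinset]
  have hsumx : #(J ×ˢ F) * (m * θ ^ ℓ) ≤ ∑ e ∈ J ×ˢ F, (#(A e) : ℝ) := by
    rw [sum_product, hcardP]
    calc (#J * #B ^ ℓ * (m * θ ^ ℓ) : ℝ) = #J * m * (θ * #B) ^ ℓ := by ring
      _ ≤ _ := hdeg
      _ = _ := sum_congr rfl fun i _ => by
        exact_mod_cast (sum_card_filter_forall_eq_sum_pow T B (W i) ℓ).symm
  have hsumy : ∑ e ∈ J ×ˢ F, (#(sparseSubsets T B s Δ (A e)) : ℝ) ≤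
      #(J ×ˢ F) * (m.choose Δ * ((s : ℝ) / b) ^ ℓ) := by
    have hbR : (0 : ℝ) < b := by exact_mod_cast hb
    rw [sum_product, hcardP]
    calc ∑ i ∈ J, ∑ f ∈ F, (#(sparseSubsets T B s Δ (A (i, f))) : ℝ)
        ≤ ∑ _i ∈ J, (m.choose Δ * s ^ ℓ : ℝ) := sum_le_sum fun i hi => by
          exact_mod_cast (sum_card_sparseSubsets_le T B (W i) ℓ s Δ).trans
            (Nat.mul_le_mul_right _ (Nat.choose_le_choose Δ (hW i hi)))
      _ = #J * (m.choose Δ * s ^ ℓ) := by rw [sum_const, nsmul_eq_mul]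
      _ ≤ #J * (m.choose Δ * (#B * ((s : ℝ) / b)) ^ ℓ) := by
          gcongr
          rw [mul_div_assoc', le_div_iff₀ hbR, mul_comm]
          gcongr
      _ = #J * #B ^ ℓ * (m.choose Δ * ((s : ℝ) / b) ^ ℓ) := by ring
  obtain ⟨⟨i, f⟩, he, hx, hy⟩ := exists_half_le_and_mul_le hP (by positivity) (by positivity)
    (fun _ _ => Nat.cast_nonneg _) hsumx hsumy
  have hAm : (#(A (i, f)) : ℝ) ≤ m := by
    exact_mod_cast (card_filter_le _ _).trans (hW i (mem_product.mp he).1)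
  refine ⟨i, (mem_product.mp he).1, A (i, f), filter_subset _ _, by linarith, ?_⟩
  have hmθ : (0 : ℝ) < m * θ ^ ℓ := by positivity
  refine le_of_mul_le_mul_left ?_ hmθ
  calc (m * θ ^ ℓ : ℝ) * #(sparseSubsets T B s Δ (A (i, f)))
      ≤ 2 * (m.choose Δ * ((s : ℝ) / b) ^ ℓ) * m := by
        refine hy.trans (mul_le_mul_of_nonneg_left hAm ?_)
        positivity
    _ = (m * θ ^ ℓ) * (2 * θ⁻¹ ^ ℓ * m.choose Δ * ((s : ℝ) / b) ^ ℓ) := by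
        rw [inv_pow]
        field_simp

end DependentRandomChoice

namespace Fin

theorem val_cycleIcc {n : ℕ} {p q : Fin n} (hpq : p ≤ q) (x : Fin n) :
    (cycleIcc p q x : ℕ) = if p ≤ x ∧ x < q then (x : ℕ) + 1 else if x = q then p else x := by
  have : NeZero n := q.neZero
  rcases lt_or_ge x p with hxp | hpx
  · rw [cycleIcc_of_lt hxp]; grind
  rcases lt_or_ge q x with hqx | hxq
  · rw [cycleIcc_of_gt hqx]; grind
  rcases eq_or_lt_of_le hxq with rfl | hxq
  · rw [cycleIcc_of_last hpq]; simp
  · rw [cycleIcc_of_ge_of_lt hpx hxq, if_pos ⟨hpx, hxq⟩, val_add_one_of_lt' (by omega)]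

theorem cycleIcc_lt_cycleIcc_iff {n : ℕ} {p q : Fin n} (hpq : p ≤ q) (x y : Fin n) :
    cycleIcc p q x < cycleIcc p q y ↔
      (x < y ∧ ¬(p ≤ x ∧ y = q)) ∨ (x = q ∧ p ≤ y ∧ y < q) := by
  rw [lt_def, val_cycleIcc hpq, val_cycleIcc hpq]
  simp only [le_def, lt_def, Fin.ext_iff]
  split_ifs <;> omega

end Fin

def orderIco {N : ℕ} (x y : ℕ) : Finset (Fin N) := {t | x ≤ (t : ℕ) ∧ (t : ℕ) < y}

@[simp]
theorem mem_orderIco {N x y : ℕ} {t : Fin N} : t ∈ orderIco x y ↔ x ≤ (t : ℕ) ∧ (t : ℕ) < y := by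
  simp [orderIco]

theorem card_orderIco_le {N : ℕ} (x y : ℕ) : #(orderIco (N := N) x y) ≤ y - x := by
  rw [← Nat.card_Ico]
  exact card_le_card_of_injOn Fin.val (fun t ht => by simpa using ht) Fin.val_injective.injOn

theorem card_orderIco {N x y : ℕ} (hy : y ≤ N) : #(orderIco (N := N) x y) = y - x := by
  have hN : ∀ m ∈ Ico x y, m < N := fun m hm => (mem_Ico.mp hm).2.trans_le hy
  rw [← Nat.card_Ico, ← card_attachFin _ hN]
  congr 1
  ext t
  simp

theorem sum_orderIco_eq_sum_range {M : Type*} [AddCommMonoid M] {N : ℕ} (p m n : ℕ)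
    (g : Fin N → M) :
    ∑ v ∈ orderIco p (p + n * m), g v =
      ∑ i ∈ range n, ∑ v ∈ orderIco (p + i * m) (p + i * m + m), g v := by
  induction n with
  | zero =>
    simp only [zero_mul, add_zero, range_zero, sum_empty]
    exact sum_eq_zero fun v hv => absurd (mem_orderIco.mp hv) (by omega)
  | succ n ih =>
    have hunion : orderIco (N := N) p (p + (n + 1) * m) =
        orderIco p (p + n * m) ∪ orderIco (p + n * m) (p + n * m + m) := by
      ext t
      simp only [mem_orderIco, mem_union, add_one_mul]
      omega
    have hdisj : Disjoint (orderIco (N := N) p (p + n * m))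
        (orderIco (p + n * m) (p + n * m + m)) :=
      disjoint_left.mpr fun t h h' => by simp only [mem_orderIco] at h h'; omega
    rw [hunion, sum_union hdisj, ih, sum_range_succ]

/-- The natural order `0, 1, …, N - 1` of `Fin N` is a median order of `T`. -/
def IsMedianOrder {N : ℕ} (T : Fin N → Fin N → Prop) : Prop :=
  ∀ σ : Equiv.Perm (Fin N),
    #{e : Fin N × Fin N | e.1 < e.2 ∧ T (σ e.1) (σ e.2)} ≤
      #{e : Fin N × Fin N | e.1 < e.2 ∧ T e.1 e.2}

namespace IsMedianOrder

variable {N : ℕ} {T : Fin N → Fin N → Prop}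

theorem card_forward_le (hT : IsMedianOrder T) (ρ : Equiv.Perm (Fin N)) :
    #{e : Fin N × Fin N | ρ e.1 < ρ e.2 ∧ T e.1 e.2} ≤
      #{e : Fin N × Fin N | e.1 < e.2 ∧ T e.1 e.2} :=
  calc _ = #{e : Fin N × Fin N | e.1 < e.2 ∧ T (ρ.symm e.1) (ρ.symm e.2)} :=
        card_equiv (ρ.prodCongr ρ) (by simp)
    _ ≤ _ := hT ρ.symm

theorem card_out_le_card_in (hT : IsMedianOrder T) {p q : Fin N} (hpq : p ≤ q) :
    #{t | p ≤ t ∧ t < q ∧ T q t} ≤ #{t | p ≤ t ∧ t < q ∧ T t q} := by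
  let forward (ρ : Fin N → Fin N) : Finset (Fin N × Fin N) := {e | ρ e.1 < ρ e.2 ∧ T e.1 e.2}
  have hρ := Fin.cycleIcc_lt_cycleIcc_iff hpq
  have gained : forward (Fin.cycleIcc p q) \ forward id =
      ({t | p ≤ t ∧ t < q ∧ T q t} : Finset _).image (Prod.mk q) := by
    ext ⟨x, y⟩
    simp only [forward, mem_sdiff, mem_filter, mem_univ, true_and, id, hρ, mem_image,
      Prod.mk.injEq]
    grind
  have lost : forward id \ forward (Fin.cycleIcc p q) =
      ({t | p ≤ t ∧ t < q ∧ T t q} : Finset _).image (fun t => (t, q)) := by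
    ext ⟨x, y⟩
    simp only [forward, mem_sdiff, mem_filter, mem_univ, true_and, id, hρ, mem_image,
      Prod.mk.injEq]
    grind
  have h : #(forward (Fin.cycleIcc p q) \ forward id) ≤
      #(forward id \ forward (Fin.cycleIcc p q)) :=
    card_sdiff_le_card_sdiff_iff.mpr (hT.card_forward_le (Fin.cycleIcc p q))
  rwa [gained, lost, card_image_of_injective _ (Prod.mk_right_injective q),
    card_image_of_injective _ (Prod.mk_left_injective q)] at h

theorem sub_le_two_mul_card_in (hT : IsMedianOrder T)
    (htour : ∀ x y : Fin N, x ≠ y → (T x y ↔ ¬T y x)) (p : ℕ) (q : Fin N) :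
    q - p ≤ 2 * #{t ∈ orderIco p q | T t q} := by
  rcases lt_or_ge (q : ℕ) p with hqp | hpq
  · omega
  obtain ⟨p, rfl⟩ : ∃ p' : Fin N, (p' : ℕ) = p := ⟨⟨p, hpq.trans_lt q.isLt⟩, rfl⟩
  have hout : {t ∈ orderIco p q | ¬T t q} = {t ∈ orderIco p q | T q t} :=
    filter_congr fun t ht => by
      have hne : q ≠ t := by rintro rfl; simp at ht
      exact (htour q t hne).symm
  have hsplit := card_filter_add_card_filter_not (s := orderIco (N := N) p q) (fun t => T t q)
  rw [card_orderIco q.isLt.le, hout] at hsplit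
  have hmed := hT.card_out_le_card_in (Fin.le_def.mpr hpq)
  simp only [orderIco, filter_filter, Fin.val_fin_le, Fin.val_fin_lt, and_assoc] at hsplit ⊢
  omega

theorem le_two_mul_card_in_add (hT : IsMedianOrder T)
    (htour : ∀ x y : Fin N, x ≠ y → (T x y ↔ ¬T y x)) {p j : ℕ} {y : Fin N} (hjy : j ≤ y) :
    j - p ≤ 2 * #{t ∈ orderIco p j | T t y} + (y - j) := by
  have hsub : {t ∈ orderIco p y | T t y} ⊆ {t ∈ orderIco p j | T t y} ∪ orderIco j y := by
    intro t ht
    simp only [mem_filter, mem_orderIco, mem_union] at ht ⊢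
    rcases lt_or_ge (t : ℕ) j with htj | hjt
    · exact Or.inl ⟨⟨ht.1.1, htj⟩, ht.2⟩
    · exact Or.inr ⟨hjt, ht.1.2⟩
  have := (card_le_card hsub).trans (card_union_le _ _)
  have := card_orderIco_le (N := N) j y
  have := hT.sub_le_two_mul_card_in htour p y
  omega

theorem mul_card_le_sum_card_out_add (hT : IsMedianOrder T)
    (htour : ∀ x y : Fin N, x ≠ y → (T x y ↔ ¬T y x)) {p k m a : ℕ} {B : Finset (Fin N)}
    (hB : ∀ y ∈ B, p + 2 * k * m ≤ y ∧ (y : ℕ) < p + 2 * k * m + a) (ha : a ≤ 2 * m) :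
    #B * (k * m) ≤ ∑ v ∈ orderIco p (p + 2 * k * m), #{y ∈ B | T v y} + #B * m := by
  have hdouble : ∑ v ∈ orderIco p (p + 2 * k * m), #{y ∈ B | T v y} =
      ∑ y ∈ B, #{v ∈ orderIco p (p + 2 * k * m) | T v y} :=
    sum_card_bipartiteAbove_eq_sum_card_bipartiteBelow _
  have hin : ∀ y ∈ B, k * m ≤ #{v ∈ orderIco p (p + 2 * k * m) | T v y} + m := fun y hy => by
    have := hT.le_two_mul_card_in_add htour (p := p) (hB y hy).1
    have := hB y hy
    have : 2 * k * m = 2 * (k * m) := by ring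
    omega
  calc #B * (k * m) = ∑ _y ∈ B, k * m := by rw [sum_const, smul_eq_mul]
    _ ≤ ∑ y ∈ B, (#{v ∈ orderIco p (p + 2 * k * m) | T v y} + m) := sum_le_sum hin
    _ = _ := by rw [sum_add_distrib, sum_const, smul_eq_mul, hdouble]

theorem card_mul_pow_le_sum_pow_card_out (hT : IsMedianOrder T)
    (htour : ∀ x y : Fin N, x ≠ y → (T x y ↔ ¬T y x))
    {p k m a : ℕ} {B : Finset (Fin N)} (hN : p + 2 * k * m ≤ N)
    (hB : ∀ y ∈ B, p + 2 * k * m ≤ y ∧ (y : ℕ) < p + 2 * k * m + a) (ha : a ≤ 2 * m)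
    (hk : 0 < k) (ℓ : ℕ) :
    (2 * k * m : ℝ) * (((k : ℝ) - 1) / (2 * k) * #B) ^ ℓ ≤
      ∑ v ∈ orderIco p (p + 2 * k * m), (#{y ∈ B | T v y} : ℝ) ^ ℓ := by
  have hI : (#(orderIco (N := N) p (p + 2 * k * m)) : ℝ) = 2 * k * m := by
    rw [card_orderIco hN, Nat.add_sub_cancel_left]; push_cast; ring
  have hkR : (1 : ℝ) ≤ k := by exact_mod_cast hk
  rw [← hI]
  refine card_mul_pow_le_sum_pow (fun _ _ => Nat.cast_nonneg _) (by positivity) ?_ ℓ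
  have hsum : (#B * (k * m) : ℝ) ≤
      ∑ v ∈ orderIco p (p + 2 * k * m), (#{y ∈ B | T v y} : ℝ) + #B * m := by
    exact_mod_cast hT.mul_card_le_sum_card_out_add htour hB ha
  calc (#(orderIco (N := N) p (p + 2 * k * m)) : ℝ) * (((k : ℝ) - 1) / (2 * k) * #B)
      = #B * (k * m) - #B * m := by rw [hI]; field_simp
    _ ≤ _ := by linarith

end IsMedianOrder

theorem dependent_random_choice_median_general (N a a' b ℓ s k Δminus : ℕ)
    (ha' : 0 < a') (hb : 0 < b) (hℓ : 0 < ℓ) (hk : 0 < k)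
    (hΔ : 0 < Δminus) (haa' : a ≤ 2 * a')
    (T : Fin N → Fin N → Prop)
    (htour : ∀ i j : Fin N, i ≠ j → (T i j ↔ ¬ T j i))
    (hmedian : ∀ σ : Equiv.Perm (Fin N),
      (Finset.univ.filter (fun p : Fin N × Fin N => p.1 < p.2 ∧ T (σ p.1) (σ p.2))).card ≤
      (Finset.univ.filter (fun p : Fin N × Fin N => p.1 < p.2 ∧ T p.1 p.2)).card)
    (j : ℕ) (hj₁ : 2 * k * a' ≤ j) (hj₂ : j + a ≤ N)
    (B : Finset (Fin N)) (hB : ∀ x ∈ B, j ≤ (x : ℕ) ∧ (x : ℕ) < j + a) (hBcard : b ≤ B.card) :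
    ∃ j' : ℕ, j - 2 * k * a' ≤ j' ∧ j' ≤ j - a' ∧
      ∃ A : Finset (Fin N),
        (∀ x ∈ A, j' ≤ (x : ℕ) ∧ (x : ℕ) < j' + a') ∧
        ((a' : ℝ) / 2 * (((k : ℝ) - 1) / (2 * k)) ^ ℓ ≤ A.card) ∧
        (((A.powersetCard Δminus).filter
            (fun S => (B.filter (fun y => ∀ x ∈ S, T x y)).card < s + 1)).card : ℝ) ≤
          4 * ((2 * (k : ℝ)) / ((k : ℝ) - 1)) ^ ℓ * (a'.choose Δminus) * ((s : ℝ) / b) ^ ℓ := by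
  obtain rfl | hk2 : k = 1 ∨ 2 ≤ k := by omega
  · -- both bounds are `0` (the second since `2 / 0 = 0` in `ℝ`), and `A = ∅` meets them
    refine ⟨j - a', by omega, le_rfl, ∅, by simp, by simp [zero_pow hℓ.ne'], ?_⟩
    rw [powersetCard_eq_empty.mpr (by simpa using hΔ)]
    simp [zero_pow hℓ.ne']
  set p := j - 2 * k * a'
  have hpj : p + 2 * k * a' = j := by omega
  have hθ : 0 < ((k : ℝ) - 1) / (2 * k) := by
    have : (2 : ℝ) ≤ k := by exact_mod_cast hk2
    apply div_pos <;> linarith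
  have hdeg := IsMedianOrder.card_mul_pow_le_sum_pow_card_out hmedian htour (p := p) (m := a')
    (by omega) (by rw [hpj]; exact hB) haa' hk ℓ
  rw [sum_orderIco_eq_sum_range] at hdeg
  obtain ⟨i, hi, A, hAW, hAcard, hsparse⟩ :=
    exists_large_subset_few_sparseSubsets T B (range (2 * k))
    (fun i => orderIco (p + i * a') (p + i * a' + a')) (ℓ := ℓ) (s := s) (Δ := Δminus) hθ ha'
    (nonempty_range_iff.mpr (by omega)) hb hBcard
    (fun i _ => (card_orderIco_le _ _).trans (by omega))
    (by rwa [card_range, Nat.cast_mul, Nat.cast_ofNat])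
  have hia : (i + 1) * a' ≤ 2 * k * a' := Nat.mul_le_mul_right a' (mem_range.mp hi)
  refine ⟨p + i * a', by omega, by rw [add_one_mul] at hia; omega, A,
    fun x hx => mem_orderIco.mp (hAW hx), hAcard, ?_⟩
  refine (le_of_eq ?_).trans (hsparse.trans ?_)
  · -- not `rfl`: over `Fin N` the statement decides `∀ x ∈ S, _` by `Nat.decidableForallFin`
    unfold sparseSubsets commonOutNbhd
    congr!
  have hθinv := inv_pos.mpr hθ
  rw [inv_div] at hθinv ⊢
  gcongr
  norm_num

/-- Dependent random choice along a median order: given a tournament with a median order,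
parameters `a, a', b, ℓ, s, k, Δ⁻` with `2a' ≥ a`, an index `j` with `2ka' ≤ j`, `j + a ≤ N`,
and a set `B ⊆ [j, j+a)` of size at least `b`, there are an index `j'` with
`j - 2ka' ≤ j' ≤ j - a'` and a set `A ⊆ [j', j'+a')` such that
`|A| ≥ (a'/2)·((k-1)/(2k))^ℓ` and all but at most `4·((2k)/(k-1))^ℓ·C(a',Δ⁻)·(s/b)^ℓ`
of the `Δ⁻`-subsets `S ⊆ A` satisfy `|N⁺(S) ∩ B| ≥ s + 1`. -/
theorem dependent_random_choice_median (N a a' b ℓ s k Δminus : ℕ)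
    (ha : 0 < a) (ha' : 0 < a') (hb : 0 < b) (hℓ : 0 < ℓ) (hs : 0 < s) (hk : 0 < k)
    (hΔ : 0 < Δminus) (haa' : a ≤ 2 * a')
    (T : Fin N → Fin N → Prop)
    (hirr : ∀ i, ¬ T i i)
    (htour : ∀ i j : Fin N, i ≠ j → (T i j ↔ ¬ T j i))
    (hmedian : ∀ σ : Equiv.Perm (Fin N),
      (Finset.univ.filter (fun p : Fin N × Fin N => p.1 < p.2 ∧ T (σ p.1) (σ p.2))).card ≤
      (Finset.univ.filter (fun p : Fin N × Fin N => p.1 < p.2 ∧ T p.1 p.2)).card)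
    (j : ℕ) (hj₁ : 2 * k * a' ≤ j) (hj₂ : j + a ≤ N)
    (B : Finset (Fin N)) (hB : ∀ x ∈ B, j ≤ (x : ℕ) ∧ (x : ℕ) < j + a) (hBcard : b ≤ B.card) :
    ∃ j' : ℕ, j - 2 * k * a' ≤ j' ∧ j' ≤ j - a' ∧
      ∃ A : Finset (Fin N),
        (∀ x ∈ A, j' ≤ (x : ℕ) ∧ (x : ℕ) < j' + a') ∧
        ((a' : ℝ) / 2 * (((k : ℝ) - 1) / (2 * k)) ^ ℓ ≤ A.card) ∧
        (((A.powersetCard Δminus).filter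
            (fun S => (B.filter (fun y => ∀ x ∈ S, T x y)).card < s + 1)).card : ℝ) ≤
          4 * ((2 * (k : ℝ)) / ((k : ℝ) - 1)) ^ ℓ * (a'.choose Δminus) * ((s : ℝ) / b) ^ ℓ :=
  dependent_random_choice_median_general N a a' b ℓ s k Δminus ha' hb hℓ hk hΔ haa' T htour hmedian
    j hj₁ hj₂ B hB hBcard
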